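/- arXiv:2301.06784 — 2 statements merged into one kernel-verified Lean document; each statement's English description precedes it below -/
import Mathlib

section
/- For 0 < α < 1, the Gauss hypergeometric series ₂F₁(−α, −α; 1; z) = Σ_{n≥0} ((−α)_n)²/(n!)² z^n converges at z = 1 and its value is Γ(2α+1)/Γ(α+1)². -/
open Real


noncomputable def pc (α : ℝ) (n : ℕ) : ℝ := (ascPochhammer ℝ n).eval (-α) / n.factorial

lemma pc_zero (α : ℝ) : pc α 0 = 1 := by simp [pc]

lemma pc_succ (α : ℝ) (n : ℕ) : pc α (n + 1) = pc α n * ((n - α) / (n + 1)) := by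
  have h : (ascPochhammer ℝ (n+1)).eval (-α) = (ascPochhammer ℝ n).eval (-α) * (-α + n) := by
    rw [ascPochhammer_succ_right]
    simp [Polynomial.eval_mul]
  rw [pc, pc, h, Nat.factorial_succ]
  push_cast
  field_simp
  ring

lemma pc_one (α : ℝ) : pc α 1 = -α := by
  have := pc_succ α 0
  rw [pc_zero] at this
  simpa using this

lemma pc_neg {α : ℝ} (hα : 0 < α) (hα1 : α < 1) {n : ℕ} (hn : 1 ≤ n) : pc α n < 0 := by
  induction n with
  | zero => omega
  | succ n ih =>
    rcases Nat.lt_or_ge n 1 with h | h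
    · have : n = 0 := by omega
      subst this
      rw [pc_one]; linarith
    · have := ih h
      rw [pc_succ]
      have hpos : (0:ℝ) < ((n:ℝ) - α) / (n + 1) := by
        apply div_pos
        · have : (1:ℝ) ≤ n := by exact_mod_cast h
          linarith
        · positivity
      exact mul_neg_of_neg_of_pos this hpos

lemma pc_abs_le {α : ℝ} (hα : 0 < α) (hα1 : α < 1) (n : ℕ) (hn : 1 ≤ n) : |pc α n| ≤ α / n := by
  induction n with
  | zero => omega
  | succ n ih =>
    rcases Nat.lt_or_ge n 1 with h | h
    · have : n = 0 := by omega
      subst this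
      rw [pc_one]
      simp [abs_of_pos hα, hα.le]
    · rw [pc_succ, abs_mul]
      have hn0 : (1:ℝ) ≤ n := by exact_mod_cast h
      have h1 : |((n:ℝ) - α) / (n + 1)| = ((n:ℝ) - α) / (n + 1) :=
        abs_of_nonneg (div_nonneg (by linarith) (by positivity))
      rw [h1]
      push_cast
      calc |pc α n| * (((n:ℝ) - α) / (n + 1)) ≤ (α / n) * (((n:ℝ) - α) / (n + 1)) :=
            mul_le_mul_of_nonneg_right (ih h) (div_nonneg (by linarith) (by positivity))
        _ ≤ α / (n + 1) := by
            rw [div_mul_div_comm, div_le_div_iff₀ (by positivity) (by positivity)]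
            nlinarith [mul_nonneg (mul_nonneg hα.le hα.le) (by linarith : (0:ℝ) ≤ (n:ℝ)+1)]

lemma pc_abs_le_one {α : ℝ} (hα : 0 < α) (hα1 : α < 1) (n : ℕ) : |pc α n| ≤ 1 := by
  rcases Nat.lt_or_ge n 1 with h | h
  · have : n = 0 := by omega
    subst this; simp [pc_zero]
  · calc |pc α n| ≤ α / n := pc_abs_le hα hα1 n h
      _ ≤ 1 := by
        have hn0 : (1:ℝ) ≤ n := by exact_mod_cast h
        rw [div_le_one (by linarith)]
        linarith

-- Gamma formula
lemma pc_gamma {α : ℝ} (hα : 0 < α) (hα1 : α < 1) (n : ℕ) (hn : 1 ≤ n) :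
    pc α n = -α * Real.Gamma (n - α) / (Real.Gamma (1 - α) * n.factorial) := by
  induction n with
  | zero => omega
  | succ n ih =>
    rcases Nat.lt_or_ge n 1 with h | h
    · have : n = 0 := by omega
      subst this
      rw [pc_one]
      have hG : Real.Gamma (1 - α) ≠ 0 := (Real.Gamma_pos_of_pos (by linarith)).ne'
      norm_num
      field_simp
    · rw [pc_succ, ih h]
      have hrec : Real.Gamma ((n:ℝ) + 1 - α) = ((n:ℝ) - α) * Real.Gamma ((n:ℝ) - α) := by
        rw [show (n:ℝ) + 1 - α = ((n:ℝ) - α) + 1 by ring, Real.Gamma_add_one]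
        have : (1:ℝ) ≤ n := by exact_mod_cast h
        exact (by linarith : (0:ℝ) < (n:ℝ) - α).ne'
      have hfac : ((n+1).factorial : ℝ) = (n + 1) * n.factorial := by
        rw [Nat.factorial_succ]; push_cast; ring
      push_cast
      rw [hrec, hfac]
      have h1 : ((n:ℝ)+1) ≠ 0 := by positivity
      have h2 : (Real.Gamma (1-α)) ≠ 0 := (Real.Gamma_pos_of_pos (by linarith)).ne'
      have h3 : ((n.factorial:ℝ)) ≠ 0 := by positivity
      field_simp

-- generic geometric-dominated summability
lemma summable_geom_dom {x C : ℝ} (hx : |x| < 1) (c : ℕ → ℝ) (hc : ∀ n, |c n| ≤ C) :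
    Summable (fun n => c n * x ^ n) := by
  apply Summable.of_norm_bounded
    ((summable_geometric_of_lt_one (abs_nonneg x) hx).mul_left C)
  intro n
  rw [norm_mul, norm_pow]
  exact mul_le_mul (hc n) (le_refl _) (by positivity) ((abs_nonneg (c 0)).trans (hc 0))

lemma n_pc_abs_le {α : ℝ} (hα : 0 < α) (hα1 : α < 1) (n : ℕ) : |(n:ℝ) * pc α n| ≤ α := by
  rcases Nat.lt_or_ge n 1 with h | h
  · have : n = 0 := by omega
    subst this; simpa using hα.le
  · rw [abs_mul, Nat.abs_cast]
    have h2 := pc_abs_le hα hα1 n h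
    have hn0 : (0:ℝ) < n := by exact_mod_cast h
    calc (n:ℝ) * |pc α n| ≤ (n:ℝ) * (α / n) := by
          exact mul_le_mul_of_nonneg_left h2 hn0.le
      _ = α := by field_simp

-- the sum function
noncomputable def gfun (α : ℝ) (x : ℝ) : ℝ := ∑' n, pc α n * x ^ n

lemma summable_pc {α : ℝ} (hα : 0 < α) (hα1 : α < 1) {x : ℝ} (hx : |x| < 1) :
    Summable (fun n => pc α n * x ^ n) :=
  summable_geom_dom hx _ (pc_abs_le_one hα hα1)

-- derivative of gfun
lemma gfun_hasDeriv {α : ℝ} (hα : 0 < α) (hα1 : α < 1) {x : ℝ} (hx : |x| < 1) :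
    HasDerivAt (gfun α) (∑' n : ℕ, (n:ℝ) * pc α n * x ^ (n - 1)) x := by
  set r : ℝ := (|x| + 1) / 2 with hr
  have hr0 : 0 < r := by positivity
  have hxr : |x| < r := by rw [hr]; linarith
  have hr1 : r < 1 := by rw [hr]; linarith
  have hsum : Summable (fun n : ℕ => α * r ^ (n - 1)) := by
    apply (summable_nat_add_iff 1).mp
    simpa using ((summable_geometric_of_lt_one hr0.le hr1).mul_left α)
  have H : HasDerivAt (fun z => ∑' n : ℕ, pc α n * z ^ n)
      (∑' n : ℕ, pc α n * ((n:ℝ) * x ^ (n - 1))) x := by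
    refine hasDerivAt_tsum_of_isPreconnected (y₀ := 0) hsum (isOpen_Ioo (a := -r) (b := r))
      ((convex_Ioo _ _).isPreconnected)
      (fun n y _ => HasDerivAt.const_mul (pc α n) (hasDerivAt_pow n y)) ?_ ?_ ?_ ?_
    · intro n y hy
      rcases Nat.lt_or_ge n 1 with h | h
      · have : n = 0 := by omega
        subst this; simpa using hα.le
      · have hyr : |y| ≤ r := by
          rw [abs_le]; exact ⟨(Set.mem_Ioo.mp hy).1.le, (Set.mem_Ioo.mp hy).2.le⟩
        have heq : ‖pc α n * ((n:ℝ) * y ^ (n-1))‖ = |(n:ℝ) * pc α n| * |y| ^ (n-1) := by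
          rw [norm_mul, Real.norm_eq_abs, Real.norm_eq_abs, abs_mul, abs_pow, abs_mul,
            Nat.abs_cast]
          ring
        rw [heq]
        exact mul_le_mul (n_pc_abs_le hα hα1 n) (pow_le_pow_left₀ (abs_nonneg y) hyr _)
          (by positivity) hα.le
    · exact Set.mem_Ioo.mpr ⟨by linarith, hr0⟩
    · apply summable_of_ne_finset_zero (s := {0})
      intro n hn
      simp only [Finset.mem_singleton] at hn
      simp [zero_pow hn]
    · exact Set.mem_Ioo.mpr (abs_lt.mp hxr)
  have : (∑' n : ℕ, pc α n * ((n:ℝ) * x ^ (n - 1))) = ∑' n : ℕ, (n:ℝ) * pc α n * x ^ (n - 1) :=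
    tsum_congr (fun n => by ring)
  rw [this] at H
  exact H

lemma summable_npc {α : ℝ} (hα : 0 < α) (hα1 : α < 1) {x : ℝ} (hx : |x| < 1) :
    Summable (fun n : ℕ => (n:ℝ) * pc α n * x ^ n) := by
  have := summable_geom_dom hx (fun n => (n:ℝ) * pc α n) (fun n => n_pc_abs_le hα hα1 n)
  exact this

lemma summable_deriv_pc {α : ℝ} (hα : 0 < α) (hα1 : α < 1) {x : ℝ} (hx : |x| < 1) :
    Summable (fun n : ℕ => (n:ℝ) * pc α n * x ^ (n - 1)) := by
  apply (summable_nat_add_iff 1).mp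
  have := summable_geom_dom hx (fun n => ((n+1:ℕ):ℝ) * pc α (n+1))
    (fun n => n_pc_abs_le hα hα1 (n+1))
  convert this using 2 with n
  · rfl
  · simp

-- the ODE
lemma gfun_ode {α : ℝ} (hα : 0 < α) (hα1 : α < 1) {x : ℝ} (hx : |x| < 1) :
    (1 - x) * (∑' n : ℕ, (n:ℝ) * pc α n * x ^ (n - 1)) = -α * gfun α x := by
  set D := ∑' n : ℕ, (n:ℝ) * pc α n * x ^ (n - 1) with hD
  have hrec : ∀ m : ℕ, ((m:ℝ) + 1) * pc α (m+1) = ((m:ℝ) - α) * pc α m := by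
    intro m
    rw [pc_succ]
    have : ((m:ℝ) + 1) ≠ 0 := by positivity
    field_simp
  have h1 : D = ∑' m : ℕ, ((m:ℝ) - α) * pc α m * x ^ m := by
    rw [hD, Summable.tsum_eq_zero_add (summable_deriv_pc hα hα1 hx)]
    simp only [Nat.cast_zero, zero_mul, zero_add]
    apply tsum_congr
    intro m
    rw [show m + 1 - 1 = m from rfl]
    push_cast
    rw [hrec m]
  have h2 : x * D = ∑' n : ℕ, (n:ℝ) * pc α n * x ^ n := by
    rw [hD, ← tsum_mul_left]
    apply tsum_congr
    intro n
    cases n with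
    | zero => simp
    | succ m =>
        rw [show m + 1 - 1 = m from rfl]
        ring
  have hs2 : Summable (fun m : ℕ => ((m:ℝ) - α) * pc α m * x ^ m) := by
    apply summable_geom_dom hx
    intro n
    calc |((n:ℝ) - α) * pc α n| ≤ |(n:ℝ) * pc α n| + |α * pc α n| := by
          rw [sub_mul]
          exact abs_sub _ _
      _ ≤ α + α := by
          apply add_le_add (n_pc_abs_le hα hα1 n)
          rw [abs_mul, abs_of_pos hα]
          calc α * |pc α n| ≤ α * 1 := by
                exact mul_le_mul_of_nonneg_left (pc_abs_le_one hα hα1 n) hα.le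
            _ = α := mul_one α
  have h3 : ∑' m : ℕ, ((m:ℝ) - α) * pc α m * x ^ m
      = (∑' n : ℕ, (n:ℝ) * pc α n * x ^ n) - α * gfun α x := by
    rw [gfun, ← tsum_mul_left, ← Summable.tsum_sub (summable_npc hα hα1 hx)
      ((summable_pc hα hα1 hx).mul_left α)]
    apply tsum_congr
    intro n
    ring
  have : (1 - x) * D = D - x * D := by ring
  rw [this, h2, h1, h3]
  ring

lemma gfun_zero (α : ℝ) : gfun α 0 = 1 := by
  rw [gfun, tsum_eq_single 0 (fun n hn => by simp [zero_pow hn])]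
  simp [pc_zero]

lemma gfun_eq {α : ℝ} (hα : 0 < α) (hα1 : α < 1) {x : ℝ} (hx0 : 0 ≤ x) (hx : x < 1) :
    gfun α x = (1 - x) ^ α := by
  set h : ℝ → ℝ := fun t => gfun α t * (1 - t) ^ (-α) with hh
  have habs : ∀ t ∈ Set.Icc (0:ℝ) x, |t| < 1 := by
    intro t ht
    rw [abs_lt]
    exact ⟨by linarith [ht.1], by linarith [ht.2]⟩
  have hderiv : ∀ t ∈ Set.Icc (0:ℝ) x, HasDerivAt h 0 t := by
    intro t ht
    have ht1 : (0:ℝ) < 1 - t := by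
      have := (habs t ht).trans_le (le_refl 1)
      rw [abs_lt] at this
      linarith [this.2]
    have hg := gfun_hasDeriv hα hα1 (habs t ht)
    have hr : HasDerivAt (fun t : ℝ => (1 - t) ^ (-α)) (α * (1 - t) ^ (-α - 1)) t := by
      have hin : HasDerivAt (fun t : ℝ => 1 - t) (-1) t := by
        simpa using (hasDerivAt_id t).const_sub 1
      have := hin.rpow_const (p := -α) (Or.inl ht1.ne')
      convert this using 1
      ring
    have := hg.mul hr
    convert this using 1
    · rfl
    · rfl
    · rfl
    have hsplit : (1 - t) ^ (-α) = (1 - t) ^ (-α - 1) * (1 - t) := by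
      rw [Real.rpow_sub ht1, Real.rpow_one]
      field_simp
    have hode := gfun_ode hα hα1 (habs t ht)
    rw [hsplit]
    have : (∑' n : ℕ, (n:ℝ) * pc α n * t ^ (n-1)) * ((1 - t) ^ (-α - 1) * (1 - t))
        + gfun α t * (α * (1 - t) ^ (-α - 1))
        = (1 - t) ^ (-α - 1) * ((1 - t) * (∑' n : ℕ, (n:ℝ) * pc α n * t ^ (n-1)) + α * gfun α t) := by
      ring
    rw [this, hode]
    ring
  have hcont : ContinuousOn h (Set.Icc 0 x) :=
    fun t ht => ((hderiv t ht).continuousAt).continuousWithinAt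
  have := constant_of_has_deriv_right_zero hcont
    (fun t ht => ((hderiv t (Set.mem_Icc.mpr ⟨ht.1, ht.2.le⟩)).hasDerivWithinAt))
    x (Set.mem_Icc.mpr ⟨hx0, le_refl x⟩)
  rw [hh] at this
  simp only [gfun_zero, sub_zero, Real.one_rpow, one_mul, mul_one] at this
  have h1x : (0:ℝ) < 1 - x := by linarith
  have hcancel : (1 - x) ^ (-α) * (1 - x) ^ α = 1 := by
    rw [← Real.rpow_add h1x]
    norm_num
  calc gfun α x = gfun α x * ((1 - x) ^ (-α) * (1 - x) ^ α) := by rw [hcancel]; ring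
    _ = (gfun α x * (1 - x) ^ (-α)) * (1 - x) ^ α := by ring
    _ = 1 * (1 - x) ^ α := by rw [this]
    _ = (1 - x) ^ α := one_mul _

lemma hasSum_pc {α : ℝ} (hα : 0 < α) (hα1 : α < 1) {x : ℝ} (hx0 : 0 ≤ x) (hx : x < 1) :
    HasSum (fun n : ℕ => pc α n * x ^ n) ((1 - x) ^ α) := by
  have := (summable_pc hα hα1 (by rw [abs_of_nonneg hx0]; exact hx)).hasSum
  rwa [show (∑' n : ℕ, pc α n * x ^ n) = (1-x)^α from gfun_eq hα hα1 hx0 hx] at this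

lemma hasSum_pc_tail {α : ℝ} (hα : 0 < α) (hα1 : α < 1) {x : ℝ} (hx0 : 0 ≤ x) (hx : x < 1) :
    HasSum (fun n : ℕ => pc α (n+1) * x ^ (n+1)) ((1 - x) ^ α - 1) := by
  have h := (hasSum_nat_add_iff' 1).mpr (hasSum_pc hα hα1 hx0 hx)
  simpa [pc_zero] using h

open MeasureTheory in
lemma betaInt_integrable {u v : ℝ} (hu : 0 < u) (hv : 0 < v) :
    IntegrableOn (fun t : ℝ => t ^ (u - 1) * (1 - t) ^ (v - 1)) (Set.Ioo 0 1) := by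
  have hc : IntervalIntegrable (fun x : ℝ => (x:ℂ) ^ ((u:ℂ) - 1) * ((1:ℂ) - (x:ℂ)) ^ ((v:ℂ) - 1))
      volume 0 1 := Complex.betaIntegral_convergent (by simpa using hu) (by simpa using hv)
  have hn := hc.norm
  rw [intervalIntegrable_iff_integrableOn_Ioc_of_le (by norm_num : (0:ℝ) ≤ 1)] at hn
  apply (hn.mono_set Set.Ioo_subset_Ioc_self).congr_fun ?_ measurableSet_Ioo
  intro x hx
  obtain ⟨hx0, hx1⟩ := hx
  show ‖(x:ℂ) ^ ((u:ℂ) - 1) * ((1:ℂ) - (x:ℂ)) ^ ((v:ℂ) - 1)‖ = _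
  rw [norm_mul]
  congr 1
  · rw [Complex.norm_cpow_eq_rpow_re_of_pos hx0]
    norm_num
  · rw [show (1:ℂ) - (x:ℂ) = ((1 - x : ℝ) : ℂ) by push_cast; ring,
      Complex.norm_cpow_eq_rpow_re_of_pos (by linarith)]
    norm_num

open MeasureTheory in
lemma betaInt_eq {u v : ℝ} (hu : 0 < u) (hv : 0 < v) :
    ∫ t in Set.Ioo (0:ℝ) 1, t ^ (u - 1) * (1 - t) ^ (v - 1)
      = Real.Gamma u * Real.Gamma v / Real.Gamma (u + v) := by
  have key : ((∫ t in Set.Ioo (0:ℝ) 1, t ^ (u - 1) * (1 - t) ^ (v - 1) : ℝ) : ℂ)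
      = Complex.betaIntegral u v := by
    rw [Complex.betaIntegral]
    rw [← integral_Ioc_eq_integral_Ioo, ← intervalIntegral.integral_of_le (by norm_num : (0:ℝ) ≤ 1)]
    rw [← intervalIntegral.integral_ofReal]
    apply intervalIntegral.integral_congr
    intro x hx
    rw [Set.uIcc_of_le (by norm_num : (0:ℝ) ≤ 1)] at hx
    obtain ⟨hx0, hx1⟩ := hx
    push_cast
    rw [Complex.ofReal_cpow hx0, Complex.ofReal_cpow (by linarith : (0:ℝ) ≤ 1 - x)]
    push_cast
    ring
  have hbeta := Complex.Gamma_mul_Gamma_eq_betaIntegral (s := (u:ℂ)) (t := (v:ℂ))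
    (by simpa using hu) (by simpa using hv)
  rw [← key] at hbeta
  have huv : Real.Gamma (u + v) ≠ 0 := (Real.Gamma_pos_of_pos (by linarith)).ne'
  have : ((Real.Gamma u * Real.Gamma v : ℝ) : ℂ)
      = ((Real.Gamma (u + v) * ∫ t in Set.Ioo (0:ℝ) 1, t ^ (u-1) * (1-t) ^ (v-1) : ℝ) : ℂ) := by
    push_cast
    rw [Complex.Gamma_ofReal, Complex.Gamma_ofReal] at hbeta
    rw [hbeta, show ((u:ℂ) + (v:ℂ)) = ((u + v : ℝ) : ℂ) by push_cast; ring, Complex.Gamma_ofReal]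
  have hre := Complex.ofReal_injective this
  field_simp
  linarith [hre]

lemma summable_pc_sq {α : ℝ} (hα : 0 < α) (hα1 : α < 1) :
    Summable (fun n : ℕ => (pc α (n+1))^2) := by
  have hsum : Summable (fun n : ℕ => α^2 * (1 / ((n:ℝ)+1)^2)) := by
    apply Summable.mul_left
    have h0 : Summable (fun n : ℕ => 1 / ((n:ℝ))^2) := by
      rw [Real.summable_one_div_nat_pow]
      omega
    have := (summable_nat_add_iff 1).mpr h0
    convert this using 2 with n
    · rfl
    push_cast
    ring
  apply Summable.of_nonneg_of_le (fun n => sq_nonneg _) ?_ hsum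
  intro n
  have h := pc_abs_le hα hα1 (n+1) (by omega)
  have h2 : (pc α (n+1))^2 = |pc α (n+1)|^2 := (sq_abs _).symm
  rw [h2]
  calc |pc α (n+1)|^2 ≤ (α / ((n:ℕ)+1:ℝ))^2 := by
        apply pow_le_pow_left₀ (abs_nonneg _) ?_ 2
        convert h using 2
        · rfl
        push_cast; ring
    _ = α^2 * (1/((n:ℝ)+1)^2) := by push_cast; field_simp

lemma pc_beta {α : ℝ} (hα : 0 < α) (hα1 : α < 1) (n : ℕ) :
    pc α (n+1) = -(1 / (Real.Gamma α * Real.Gamma (1-α)))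
      * ∫ t in Set.Ioo (0:ℝ) 1, t ^ (((n:ℝ) + 1 - α) - 1) * (1 - t) ^ ((α + 1) - 1) := by
  have hu : (0:ℝ) < (n:ℝ) + 1 - α := by
    have : (0:ℝ) ≤ n := Nat.cast_nonneg n
    linarith
  have hv : (0:ℝ) < α + 1 := by linarith
  rw [betaInt_eq hu hv]
  have hg := pc_gamma hα hα1 (n+1) (by omega)
  have hcast : ((n+1 : ℕ):ℝ) = (n:ℝ) + 1 := by push_cast; ring
  rw [hg]
  have hΓsum : (n:ℝ) + 1 - α + (α + 1) = ((n:ℝ) + 1) + 1 := by ring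
  rw [hΓsum]
  have hΓ2 : Real.Gamma (((n:ℝ) + 1) + 1) = ((n+1).factorial : ℝ) := by
    rw [show ((n:ℝ) + 1) = ((n+1 : ℕ) : ℝ) by push_cast; ring, Real.Gamma_nat_eq_factorial]
  rw [hΓ2, Real.Gamma_add_one hα.ne', hcast]
  have h1 : Real.Gamma (1 - α) ≠ 0 := (Real.Gamma_pos_of_pos (by linarith)).ne'
  have h2 : Real.Gamma α ≠ 0 := (Real.Gamma_pos_of_pos hα).ne'
  have h3 : ((n+1).factorial : ℝ) ≠ 0 := by positivity
  field_simp

open MeasureTheory in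
lemma hasSum_tail_sq {α : ℝ} (hα : 0 < α) (hα1 : α < 1) :
    HasSum (fun n : ℕ => (pc α (n+1))^2)
      ((1 / (Real.Gamma α * Real.Gamma (1-α)))
        * ∫ t in Set.Ioo (0:ℝ) 1, t ^ (-α-1) * ((1-t) ^ α - (1-t) ^ (2*α))) := by
  set K : ℝ := 1 / (Real.Gamma α * Real.Gamma (1-α)) with hK
  set F : ℕ → ℝ → ℝ := fun n t => (-K * pc α (n+1)) * (t ^ (((n:ℝ) + 1 - α) - 1) * (1 - t) ^ ((α + 1) - 1)) with hF
  have hu : ∀ n : ℕ, (0:ℝ) < (n:ℝ) + 1 - α := by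
    intro n
    have : (0:ℝ) ≤ n := Nat.cast_nonneg n
    linarith
  have hv : (0:ℝ) < α + 1 := by linarith
  have hint : ∀ n, IntegrableOn (F n) (Set.Ioo (0:ℝ) 1) volume :=
    fun n => (betaInt_integrable (hu n) hv).const_mul _
  set B : ℕ → ℝ := fun n => ∫ t in Set.Ioo (0:ℝ) 1,
      t ^ (((n:ℝ) + 1 - α) - 1) * (1 - t) ^ ((α + 1) - 1) with hB
  have hpcB : ∀ n, pc α (n+1) = -K * B n := fun n => pc_beta hα hα1 n
  have hB0 : ∀ n, 0 ≤ B n := by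
    intro n
    apply MeasureTheory.setIntegral_nonneg measurableSet_Ioo
    intro t ht
    have h1 := ht.1
    have h2 := ht.2
    have h3 : (0:ℝ) < 1 - t := by linarith
    positivity
  have hval : ∀ n, ∫ t in Set.Ioo (0:ℝ) 1, F n t = (pc α (n+1))^2 := by
    intro n
    rw [hF]
    simp only []
    rw [MeasureTheory.integral_const_mul]
    show -K * pc α (n+1) * B n = _
    rw [pow_two, hpcB n]
    ring
  have hnorm : ∀ n, ∫ t in Set.Ioo (0:ℝ) 1, ‖F n t‖ = (pc α (n+1))^2 := by
    intro n
    have heq : ∀ t ∈ Set.Ioo (0:ℝ) 1, ‖F n t‖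
        = |(-K * pc α (n+1))| * (t ^ (((n:ℝ) + 1 - α) - 1) * (1 - t) ^ ((α + 1) - 1)) := by
      intro t ht
      have ht0 := ht.1
      have ht1 := ht.2
      have ht2 : (0:ℝ) < 1 - t := by linarith
      rw [hF]
      simp only []
      rw [norm_mul, Real.norm_eq_abs, Real.norm_eq_abs]
      congr 1
      apply abs_of_nonneg
      positivity
    rw [MeasureTheory.setIntegral_congr_fun measurableSet_Ioo heq,
      MeasureTheory.integral_const_mul]
    show |(-K * pc α (n+1))| * B n = _
    have : |(-K * pc α (n+1))| * B n = |(-K * pc α (n+1)) * B n| := by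
      rw [abs_mul (-K * pc α (n+1)) (B n), abs_of_nonneg (hB0 n)]
    rw [this, show (-K * pc α (n+1)) * B n = (pc α (n+1))^2 by rw [pow_two, hpcB n]; ring]
    exact abs_of_nonneg (sq_nonneg _)
  have hF_sum : Summable (fun n => ∫ t in Set.Ioo (0:ℝ) 1, ‖F n t‖) := by
    rw [funext hnorm]
    exact summable_pc_sq hα hα1
  have H := MeasureTheory.hasSum_integral_of_summable_integral_norm
    (μ := MeasureTheory.volume.restrict (Set.Ioo (0:ℝ) 1)) (F := F) hint hF_sum
  rw [funext hval] at H
  have hpt : ∀ t ∈ Set.Ioo (0:ℝ) 1, (∑' n, F n t)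
      = K * (t ^ (-α-1) * ((1-t) ^ α - (1-t) ^ (2*α))) := by
    intro t ht
    have ht0 := ht.1
    have ht1 := ht.2
    have h1t : (0:ℝ) < 1 - t := by linarith
    have hFt : ∀ n : ℕ, F n t
        = (-K * (t ^ (-α-1) * (1-t) ^ α)) * (pc α (n+1) * t ^ (n+1)) := by
      intro n
      rw [hF]
      simp only []
      have hexp : t ^ (((n:ℝ) + 1 - α) - 1) = t ^ (n+1 : ℕ) * t ^ (-α-1) := by
        rw [← Real.rpow_natCast t (n+1), ← Real.rpow_add ht0]
        congr 1
        push_cast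
        ring
      have hexp2 : (1 - t) ^ ((α + 1) - 1) = (1 - t) ^ α := by
        congr 1
        ring
      rw [hexp, hexp2]
      ring
    rw [funext hFt, tsum_mul_left, (hasSum_pc_tail hα hα1 ht0.le ht1).tsum_eq]
    have h2 : (1-t) ^ α * (1-t) ^ α = (1-t) ^ (2*α) := by
      rw [← Real.rpow_add h1t]
      congr 1
      ring
    linear_combination (-K * t ^ (-α-1)) * h2
  have hfin : ∫ t in Set.Ioo (0:ℝ) 1, (∑' n, F n t)
      = K * ∫ t in Set.Ioo (0:ℝ) 1, t ^ (-α-1) * ((1-t) ^ α - (1-t) ^ (2*α)) := by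
    rw [MeasureTheory.setIntegral_congr_fun measurableSet_Ioo hpt,
      MeasureTheory.integral_const_mul]
  rw [hfin] at H
  exact H

lemma betaInt_integrable' {p q : ℝ} (hp : -1 < p) (hq : -1 < q) :
    MeasureTheory.IntegrableOn (fun t : ℝ => t ^ p * (1-t) ^ q) (Set.Ioo (0:ℝ) 1) := by
  have := betaInt_integrable (u := p+1) (v := q+1) (by linarith) (by linarith)
  simpa using this

lemma betaInt_eq' {p q : ℝ} (hp : -1 < p) (hq : -1 < q) :
    ∫ t in Set.Ioo (0:ℝ) 1, t ^ p * (1-t) ^ q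
      = Real.Gamma (p+1) * Real.Gamma (q+1) / Real.Gamma (p+q+2) := by
  have := betaInt_eq (u := p+1) (v := q+1) (by linarith) (by linarith)
  rw [show p+1+(q+1) = p+q+2 by ring] at this
  rw [← this]
  apply MeasureTheory.setIntegral_congr_fun measurableSet_Ioo
  intro t ht
  norm_num

-- continuity helpers
lemma contOn_rpow (c : ℝ) : ContinuousOn (fun t : ℝ => t ^ c) (Set.Ioo (0:ℝ) 1) :=
  fun x hx => (Real.continuousAt_rpow_const x c (Or.inl hx.1.ne')).continuousWithinAt

lemma contOn_rpow1 (c : ℝ) : ContinuousOn (fun t : ℝ => (1-t) ^ c) (Set.Ioo (0:ℝ) 1) := by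
  intro x hx
  have h : (1:ℝ) - x ≠ 0 := by have := hx.2; intro h'; linarith [sub_eq_zero.mp h']
  exact ((continuousAt_const.sub continuousAt_id).rpow_const (Or.inl h)).continuousWithinAt

lemma f0_integrable {α : ℝ} (hα : 0 < α) (hα1 : α < 1) :
    MeasureTheory.IntegrableOn
      (fun t : ℝ => t ^ (-α-1) * ((1-t) ^ α - (1-t) ^ (2*α))) (Set.Ioo (0:ℝ) 1) := by
  apply MeasureTheory.Integrable.mono'
    (g := fun t : ℝ => t ^ (-α) * (1-t) ^ (0:ℝ))
    (betaInt_integrable' (by linarith) (by norm_num))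
  · apply ContinuousOn.aestronglyMeasurable ?_ measurableSet_Ioo
    exact (contOn_rpow _).mul ((contOn_rpow1 α).sub (contOn_rpow1 (2*α)))
  · rw [MeasureTheory.ae_restrict_iff' measurableSet_Ioo]
    filter_upwards with t
    intro ht
    obtain ⟨ht0, ht1⟩ := ht
    have h1t : (0:ℝ) < 1 - t := by linarith
    have hb1 : (1-t) ^ α ≤ 1 := Real.rpow_le_one h1t.le (by linarith) hα.le
    have hb2 : (1-t) ≤ (1-t) ^ α := by
      have := Real.rpow_le_rpow_of_exponent_ge h1t (by linarith) hα1.le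
      rwa [Real.rpow_one] at this
    have hsplit : (1-t) ^ (2*α) = (1-t) ^ α * (1-t) ^ α := by
      rw [← Real.rpow_add h1t]; congr 1; ring
    have hnn : 0 ≤ (1-t) ^ α - (1-t) ^ (2*α) := by
      rw [hsplit]
      nlinarith [Real.rpow_nonneg h1t.le α]
    have hle : (1-t) ^ α - (1-t) ^ (2*α) ≤ t := by
      rw [hsplit]
      nlinarith [Real.rpow_nonneg h1t.le α]
    rw [Real.norm_eq_abs, abs_of_nonneg (by positivity)]
    calc t ^ (-α-1) * ((1-t) ^ α - (1-t) ^ (2*α)) ≤ t ^ (-α-1) * t := by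
          exact mul_le_mul_of_nonneg_left hle (Real.rpow_nonneg ht0.le _)
      _ = t ^ (-α) * (1-t) ^ (0:ℝ) := by
          rw [Real.rpow_zero, mul_one, ← Real.rpow_add_one ht0.ne']
          norm_num

lemma ibp_interval {α : ℝ} (hα : 0 < α) (hα1 : α < 1) {a b : ℝ}
    (ha : 0 < a) (hab : a ≤ b) (hb : b < 1) :
    ∫ t in a..b, t ^ (-α-1) * ((1-t) ^ α - (1-t) ^ (2*α))
      = ((-(b ^ (-α) / α)) * ((1-b) ^ α - (1-b) ^ (2*α))
          - (-(a ^ (-α) / α)) * ((1-a) ^ α - (1-a) ^ (2*α)))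
        - ∫ t in a..b, (t ^ (-α) * (1-t) ^ (α-1) - 2 * (t ^ (-α) * (1-t) ^ (2*α-1))) := by
  set u : ℝ → ℝ := fun t => -(t ^ (-α) / α) with hu_def
  set v : ℝ → ℝ := fun t => (1-t) ^ α - (1-t) ^ (2*α) with hv_def
  set u' : ℝ → ℝ := fun t => t ^ (-α-1) with hu'_def
  set v' : ℝ → ℝ := fun t => -α * (1-t) ^ (α-1) + 2*α * (1-t) ^ (2*α-1) with hv'_def
  have hIcc : Set.uIcc a b ⊆ Set.Ioo (0:ℝ) 1 := by
    rw [Set.uIcc_of_le hab]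
    intro x hx
    exact ⟨lt_of_lt_of_le ha hx.1, lt_of_le_of_lt hx.2 hb⟩
  have hu : ∀ x ∈ Set.uIcc a b, HasDerivAt u (u' x) x := by
    intro x hx
    obtain ⟨hx0, hx1⟩ := hIcc hx
    have h := (Real.hasDerivAt_rpow_const (p := -α) (Or.inl hx0.ne')).div_const α |>.neg
    convert h using 1
    · rfl
    · rfl
    · rfl
    rw [hu'_def]
    field_simp
  have hv : ∀ x ∈ Set.uIcc a b, HasDerivAt v (v' x) x := by
    intro x hx
    obtain ⟨hx0, hx1⟩ := hIcc hx
    have h1x : (1:ℝ) - x ≠ 0 := by intro h'; have := sub_eq_zero.mp h'; linarith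
    have hin : HasDerivAt (fun t : ℝ => 1 - t) (-1) x := by
      simpa using (hasDerivAt_id x).const_sub 1
    have h1 := hin.rpow_const (p := α) (Or.inl h1x)
    have h2 := hin.rpow_const (p := 2*α) (Or.inl h1x)
    have h := h1.sub h2
    convert h using 1
    · rfl
    · rfl
    · rfl
    rw [hv'_def]
    ring
  have hcont_u : ContinuousOn u (Set.uIcc a b) :=
    fun x hx => ((hu x hx).continuousAt).continuousWithinAt
  have hcont_v : ContinuousOn v (Set.uIcc a b) :=
    fun x hx => ((hv x hx).continuousAt).continuousWithinAt
  have hcont_u' : ContinuousOn u' (Set.uIcc a b) := by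
    intro x hx
    exact (Real.continuousAt_rpow_const x _ (Or.inl (hIcc hx).1.ne')).continuousWithinAt
  have hcont_v' : ContinuousOn v' (Set.uIcc a b) := by
    intro x hx
    have h1x : (1:ℝ) - x ≠ 0 := by
      have := (hIcc hx).2; intro h'; have := sub_eq_zero.mp h'; linarith
    apply ContinuousWithinAt.add
    · exact (((continuousAt_const.sub continuousAt_id).rpow_const
        (Or.inl h1x)).const_smul (-α)).continuousWithinAt
    · exact (((continuousAt_const.sub continuousAt_id).rpow_const
        (Or.inl h1x)).const_smul (2*α)).continuousWithinAt
  have hu'i : IntervalIntegrable u' MeasureTheory.volume a b := hcont_u'.intervalIntegrable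
  have hv'i : IntervalIntegrable v' MeasureTheory.volume a b := hcont_v'.intervalIntegrable
  have hibp := intervalIntegral.integral_deriv_mul_eq_sub hu hv hu'i hv'i
  have hsplit : ∫ x in a..b, (u' x * v x + u x * v' x)
      = (∫ x in a..b, u' x * v x) + ∫ x in a..b, u x * v' x := by
    apply intervalIntegral.integral_add
    · exact (hcont_u'.mul hcont_v).intervalIntegrable
    · exact (hcont_u.mul hcont_v').intervalIntegrable
  rw [hsplit] at hibp
  have huv' : ∀ x, 0 < x → u x * v' x
      = x ^ (-α) * (1-x) ^ (α-1) - 2 * (x ^ (-α) * (1-x) ^ (2*α-1)) := by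
    intro x hx
    rw [hu_def, hv'_def]
    field_simp
    ring
  have hswap : ∫ x in a..b, u x * v' x
      = ∫ t in a..b, (t ^ (-α) * (1-t) ^ (α-1) - 2 * (t ^ (-α) * (1-t) ^ (2*α-1))) := by
    apply intervalIntegral.integral_congr
    intro x hx
    exact huv' x (hIcc hx).1
  rw [hswap] at hibp
  have : ∫ t in a..b, t ^ (-α-1) * ((1-t) ^ α - (1-t) ^ (2*α)) = ∫ x in a..b, u' x * v x := by
    apply intervalIntegral.integral_congr
    intro x hx
    rw [hu'_def, hv_def]
  rw [this]
  rw [hu_def, hv_def] at hibp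
  linarith [hibp]

lemma v_bounds {α : ℝ} (hα : 0 < α) (hα1 : α < 1) {t : ℝ} (ht0 : 0 < t) (ht1 : t < 1) :
    0 ≤ (1-t) ^ α - (1-t) ^ (2*α) ∧ (1-t) ^ α - (1-t) ^ (2*α) ≤ t := by
  have h1t : (0:ℝ) < 1 - t := by linarith
  have hb1 : (1-t) ^ α ≤ 1 := Real.rpow_le_one h1t.le (by linarith) hα.le
  have hb2 : (1-t) ≤ (1-t) ^ α := by
    have := Real.rpow_le_rpow_of_exponent_ge h1t (by linarith) hα1.le
    rwa [Real.rpow_one] at this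
  have hsplit : (1-t) ^ (2*α) = (1-t) ^ α * (1-t) ^ α := by
    rw [← Real.rpow_add h1t]; congr 1; ring
  constructor
  · rw [hsplit]; nlinarith [Real.rpow_nonneg h1t.le α]
  · rw [hsplit]; nlinarith [Real.rpow_nonneg h1t.le α]

open MeasureTheory in
lemma I_val {α : ℝ} (hα : 0 < α) (hα1 : α < 1) :
    ∫ t in Set.Ioo (0:ℝ) 1, t ^ (-α-1) * ((1-t) ^ α - (1-t) ^ (2*α))
      = 2 * (∫ t in Set.Ioo (0:ℝ) 1, t ^ (-α) * (1-t) ^ (2*α-1))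
        - ∫ t in Set.Ioo (0:ℝ) 1, t ^ (-α) * (1-t) ^ (α-1) := by
  set f0 : ℝ → ℝ := fun t => t ^ (-α-1) * ((1-t) ^ α - (1-t) ^ (2*α)) with hf0_def
  set q : ℝ → ℝ := fun t => t ^ (-α) * (1-t) ^ (α-1) - 2 * (t ^ (-α) * (1-t) ^ (2*α-1)) with hq_def
  set e : ℕ → ℝ := fun n => 1 / ((n:ℝ) + 4) with he_def
  have he0 : ∀ n, 0 < e n := fun n => by rw [he_def]; positivity
  have he4 : ∀ n, e n ≤ 1/4 := by
    intro n
    rw [he_def]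
    have h4 : (4:ℝ) ≤ (n:ℝ) + 4 := by linarith [Nat.cast_nonneg (α := ℝ) n]
    exact one_div_le_one_div_of_le (by norm_num) h4
  have heab : ∀ n, e n ≤ 1 - e n := fun n => by linarith [he4 n]
  have het : Filter.Tendsto e Filter.atTop (nhds 0) := by
    rw [he_def]
    simp only [one_div]
    apply Filter.Tendsto.inv_tendsto_atTop
    apply Filter.tendsto_atTop_add_const_right
    exact tendsto_natCast_atTop_atTop
  set s : ℕ → Set ℝ := fun n => Set.Ioo (e n) (1 - e n) with hs_def
  have hsm : ∀ n, MeasurableSet (s n) := fun n => measurableSet_Ioo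
  have hmono : Monotone s := by
    intro m n hmn
    apply Set.Ioo_subset_Ioo
    · rw [he_def]
      apply div_le_div_of_nonneg_left (by norm_num) (by positivity)
      have : (m:ℝ) ≤ n := by exact_mod_cast hmn
      linarith
    · have : e n ≤ e m := by
        rw [he_def]
        apply div_le_div_of_nonneg_left (by norm_num) (by positivity)
        have : (m:ℝ) ≤ n := by exact_mod_cast hmn
        linarith
      linarith
  have hUnion : (⋃ n, s n) = Set.Ioo (0:ℝ) 1 := by
    apply Set.Subset.antisymm
    · apply Set.iUnion_subset
      intro n
      apply Set.Ioo_subset_Ioo (he0 n).le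
      linarith [he0 n]
    · intro x hx
      obtain ⟨hx0, hx1⟩ := hx
      have hex : ∃ n : ℕ, e n < x ∧ e n < 1 - x := by
        obtain ⟨n, hn⟩ := exists_nat_gt (max (1/x) (1/(1-x)))
        refine ⟨n, ?_, ?_⟩
        · have h1 : 1/x < (n:ℝ) + 4 := by
            have := le_max_left (1/x) (1/(1-x))
            linarith [this.trans_lt hn]
          rw [he_def]
          rw [div_lt_iff₀ (by positivity)] at h1 ⊢
          nlinarith
        · have h1 : 1/(1-x) < (n:ℝ) + 4 := by
            have := le_max_right (1/x) (1/(1-x))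
            linarith [this.trans_lt hn]
          rw [he_def]
          have hx1' : (0:ℝ) < 1 - x := by linarith
          rw [div_lt_iff₀ hx1'] at h1
          rw [div_lt_iff₀ (by positivity : (0:ℝ) < (n:ℝ)+4)]
          nlinarith
      obtain ⟨n, hn1, hn2⟩ := hex
      exact Set.mem_iUnion.mpr ⟨n, hn1, by linarith⟩
  have hf0int : IntegrableOn f0 (Set.Ioo (0:ℝ) 1) := f0_integrable hα hα1
  have hqint : IntegrableOn q (Set.Ioo (0:ℝ) 1) :=
    (betaInt_integrable' (by linarith) (by linarith)).sub
      ((betaInt_integrable' (by linarith) (by linarith)).const_mul 2)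
  have L1 : Filter.Tendsto (fun n => ∫ t in s n, f0 t) Filter.atTop
      (nhds (∫ t in Set.Ioo (0:ℝ) 1, f0 t)) := by
    have := tendsto_setIntegral_of_monotone hsm hmono (hUnion ▸ hf0int)
    rwa [hUnion] at this
  have L2 : Filter.Tendsto (fun n => ∫ t in s n, q t) Filter.atTop
      (nhds (∫ t in Set.Ioo (0:ℝ) 1, q t)) := by
    have := tendsto_setIntegral_of_monotone hsm hmono (hUnion ▸ hqint)
    rwa [hUnion] at this
  -- boundary terms
  set Bd : ℕ → ℝ := fun n =>
    (-((1 - e n) ^ (-α) / α)) * ((1-(1 - e n)) ^ α - (1-(1 - e n)) ^ (2*α))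
      - (-((e n) ^ (-α) / α)) * ((1-(e n)) ^ α - (1-(e n)) ^ (2*α)) with hBd_def
  have L3 : Filter.Tendsto Bd Filter.atTop (nhds 0) := by
    have h1 : Filter.Tendsto (fun n => 1 - e n) Filter.atTop (nhds 1) := by
      have := tendsto_const_nhds (x := (1:ℝ)) (f := Filter.atTop (α := ℕ)) |>.sub het
      simpa using this
    have h2 : Filter.Tendsto (fun n => (1 - e n) ^ (-α)) Filter.atTop (nhds 1) := by
      have hc := (Real.continuousAt_rpow_const 1 (-α) (Or.inl one_ne_zero)).tendsto
      have := hc.comp h1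
      simpa [Function.comp_def] using this
    have h3 : Filter.Tendsto (fun n => 1 - (1 - e n)) Filter.atTop (nhds 0) := by
      have := tendsto_const_nhds (x := (1:ℝ)) (f := Filter.atTop (α := ℕ)) |>.sub h1
      simpa using this
    have hrpow0 : ∀ c : ℝ, 0 < c → Filter.Tendsto (fun n => (1 - (1 - e n)) ^ c)
        Filter.atTop (nhds 0) := by
      intro c hc
      have hcont := (Real.continuousAt_rpow_const 0 c (Or.inr hc.le)).tendsto
      have := hcont.comp h3
      rw [Real.zero_rpow hc.ne'] at this
      exact this
    have hp1 : Filter.Tendsto (fun n =>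
        (-((1 - e n) ^ (-α) / α)) * ((1-(1 - e n)) ^ α - (1-(1 - e n)) ^ (2*α)))
        Filter.atTop (nhds 0) := by
      have := ((h2.div_const α).neg).mul ((hrpow0 α hα).sub (hrpow0 (2*α) (by linarith)))
      simpa using this
    have hp2 : Filter.Tendsto (fun n =>
        (-((e n) ^ (-α) / α)) * ((1-(e n)) ^ α - (1-(e n)) ^ (2*α)))
        Filter.atTop (nhds 0) := by
      apply squeeze_zero_norm (a := fun n => (1/α) * (e n) ^ (1-α))
      · intro n
        have h0 := he0 n
        have h1 : e n < 1 := by linarith [he4 n]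
        obtain ⟨hv0, hv1⟩ := v_bounds hα hα1 h0 h1
        rw [Real.norm_eq_abs, abs_mul, abs_neg, abs_div, abs_of_pos hα,
          abs_of_nonneg (Real.rpow_nonneg h0.le _), abs_of_nonneg hv0]
        rw [div_mul_eq_mul_div, div_le_iff₀ hα, one_div, inv_mul_eq_div, div_mul_eq_mul_div]
        have hkey : (e n) ^ (-α) * ((1 - e n) ^ α - (1 - e n) ^ (2*α)) ≤ (e n) ^ (1-α) := by
          calc (e n) ^ (-α) * ((1 - e n) ^ α - (1 - e n) ^ (2*α))
              ≤ (e n) ^ (-α) * (e n) := mul_le_mul_of_nonneg_left hv1 (Real.rpow_nonneg h0.le _)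
            _ = (e n) ^ (1-α) := by
                rw [← Real.rpow_add_one h0.ne' (-α)]
                congr 1
                ring
        calc e n ^ (-α) * ((1 - e n) ^ α - (1 - e n) ^ (2*α)) ≤ e n ^ (1-α) := hkey
          _ = e n ^ (1-α) * α / α := by field_simp
      · have hcont := (Real.continuousAt_rpow_const 0 (1-α) (Or.inr (by linarith))).tendsto
        have := (hcont.comp het).const_mul (1/α)
        rw [Real.zero_rpow (by linarith : (1:ℝ) - α ≠ 0)] at this
        simpa using this
    have h := hp1.sub hp2
    rw [sub_zero] at h
    exact h
  -- the identity per n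
  have hper : ∀ n, ∫ t in s n, f0 t = Bd n - ∫ t in s n, q t := by
    intro n
    have hie : ∫ t in s n, f0 t = ∫ t in (e n)..(1 - e n), f0 t := by
      rw [intervalIntegral.integral_of_le (heab n), integral_Ioc_eq_integral_Ioo]
    have hie2 : ∫ t in s n, q t = ∫ t in (e n)..(1 - e n), q t := by
      rw [intervalIntegral.integral_of_le (heab n), integral_Ioc_eq_integral_Ioo]
    rw [hie, hie2, hBd_def]
    exact ibp_interval hα hα1 (he0 n) (heab n) (by linarith [he0 n])
  rw [funext hper] at L1
  have L4 : Filter.Tendsto (fun n => Bd n - ∫ t in s n, q t) Filter.atTop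
      (nhds (0 - ∫ t in Set.Ioo (0:ℝ) 1, q t)) := L3.sub L2
  have hIq := tendsto_nhds_unique L1 L4
  rw [hIq, hq_def]
  rw [MeasureTheory.integral_sub (betaInt_integrable' (by linarith) (by linarith))
    ((betaInt_integrable' (by linarith) (by linarith)).const_mul 2),
    MeasureTheory.integral_const_mul]
  ring

/-- Gauss's summation theorem for `₂F₁(−α, −α; 1; 1)` with `0 < α < 1`:
the series `Σ_n ((−α)_n / n!)²` converges with sum `Γ(2α+1)/Γ(α+1)²`. -/
theorem gauss_hypergeometric_neg_alpha_at_one (α : ℝ) (hα : 0 < α) (hα1 : α < 1) :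
    HasSum (fun n : ℕ => ((ascPochhammer ℝ n).eval (-α) / (n.factorial : ℝ)) ^ 2)
      (Real.Gamma (2 * α + 1) / Real.Gamma (α + 1) ^ 2) := by

  have Htail := hasSum_tail_sq hα hα1
  rw [I_val hα hα1, betaInt_eq' (p := -α) (q := 2*α - 1) (by linarith) (by linarith),
      betaInt_eq' (p := -α) (q := α - 1) (by linarith) (by linarith)] at Htail
  have H := (hasSum_nat_add_iff (f := fun n : ℕ => (pc α n)^2) 1).mp Htail
  have hsum1 : (∑ i ∈ Finset.range 1, (pc α i)^2) = 1 := by simp [pc_zero]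
  rw [hsum1] at H
  have hA : (0:ℝ) < Real.Gamma α := Real.Gamma_pos_of_pos hα
  have hB : (0:ℝ) < Real.Gamma (1 - α) := Real.Gamma_pos_of_pos (by linarith)
  have hC : (0:ℝ) < Real.Gamma (2*α) := Real.Gamma_pos_of_pos (by linarith)
  have e1 : Real.Gamma (-α + 1) = Real.Gamma (1 - α) := by ring_nf
  have e2 : Real.Gamma (2*α - 1 + 1) = Real.Gamma (2*α) := by ring_nf
  have e3 : Real.Gamma (-α + (2*α - 1) + 2) = α * Real.Gamma α := by
    rw [show -α + (2*α - 1) + 2 = α + 1 by ring, Real.Gamma_add_one hα.ne']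
  have e4 : Real.Gamma (α - 1 + 1) = Real.Gamma α := by ring_nf
  have e5 : Real.Gamma (-α + (α - 1) + 2) = 1 := by
    rw [show -α + (α - 1) + 2 = 1 by ring, Real.Gamma_one]
  have e6 : Real.Gamma (2 * α + 1) = 2 * α * Real.Gamma (2*α) :=
    Real.Gamma_add_one (by positivity)
  have e7 : Real.Gamma (α + 1) = α * Real.Gamma α := Real.Gamma_add_one hα.ne'
  rw [e1, e2, e3, e4, e5] at H
  have hval : 1 / (Real.Gamma α * Real.Gamma (1-α))
        * (2 * (Real.Gamma (1-α) * Real.Gamma (2*α) / (α * Real.Gamma α))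
          - Real.Gamma (1-α) * Real.Gamma α / 1) + 1
      = Real.Gamma (2 * α + 1) / Real.Gamma (α + 1) ^ 2 := by
    rw [e6, e7]
    field_simp
    ring
  rw [hval] at H
  exact H
end

section
/- Let Ȳ_0, ..., Ȳ_{N−1} be (possibly correlated) jointly circular Gaussian variables with Var(Ȳ_ℓ) = λ_ℓ ≤ M, α ∈ (0,1), and Φ̂_ℓ = |Ȳ_ℓ|². Assuming E[Φ̂_{ℓ₁}^α Φ̂_{ℓ₂}^α] = λ_{ℓ₁}^α λ_{ℓ₂}^α Γ(α+1)² ₂F₁(−α,−α;1;ρ_{ℓ₁ℓ₂}²) with ρ² ∈ [0,1], the variance of m̂_k = (1/(αN)) Σ_ℓ e^{2πikℓ/N} Φ̂_ℓ^α satisfies Var(m̂_k) ≤ (Γ(2α+1) − Γ(α+1)²) M^{2α}/α², a bound independent of N. -/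
open MeasureTheory ProbabilityTheory Real

open Filter Topology

namespace Gauss17

noncomputable def pch (x : ℝ) (n : ℕ) : ℝ := (ascPochhammer ℝ n).eval x

lemma pch_zero (x : ℝ) : pch x 0 = 1 := by simp [pch]

lemma pch_succ (x : ℝ) (n : ℕ) : pch x (n + 1) = pch x n * (x + n) := by
  simp [pch, ascPochhammer_succ_right]

lemma pch_succ_left (x : ℝ) (n : ℕ) : pch x (n + 1) = x * pch (x + 1) n := by
  simp [pch, ascPochhammer_succ_left, Polynomial.eval_comp]

lemma pch_one (n : ℕ) : pch 1 n = (n.factorial : ℝ) := by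
  simpa [pch] using ascPochhammer_eval_one ℝ n

lemma pch_pos {x : ℝ} (hx : 0 < x) (n : ℕ) : 0 < pch x n := by
  induction n with
  | zero => simp [pch_zero]
  | succ n ih => rw [pch_succ]; positivity

lemma factorial_le_pch {c : ℝ} (hc : 1 ≤ c) (n : ℕ) : ((n.factorial : ℝ)) ≤ pch c n := by
  induction n with
  | zero => simp [pch_zero]
  | succ n ih =>
    rw [pch_succ, Nat.factorial_succ]
    push_cast
    calc ((n:ℝ) + 1) * n.factorial = (n.factorial : ℝ) * (1 + n) := by ring
    _ ≤ pch c n * (c + n) := by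
        apply mul_le_mul ih (by linarith) (by positivity)
        exact le_of_lt (pch_pos (by linarith) n)

lemma c_mul_factorial_le_pch {c : ℝ} (hc : 1 ≤ c) {n : ℕ} (hn : 1 ≤ n) :
    c * n.factorial ≤ pch c n := by
  induction n with
  | zero => omega
  | succ n ih =>
    rcases Nat.eq_zero_or_pos n with h0 | h0
    · subst h0; simp [pch_succ, pch_zero]
    · rw [pch_succ, Nat.factorial_succ]
      push_cast
      have h1 : (1:ℝ) ≤ n := by exact_mod_cast h0
      calc c * (((n:ℝ) + 1) * n.factorial) = (c * n.factorial) * (1 + n) := by ring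
      _ ≤ pch c n * (c + n) := by
          apply mul_le_mul (ih h0) (by linarith) (by positivity)
          exact le_of_lt (pch_pos (by linarith) n)

end Gauss17

namespace Gauss17

section Alpha

variable {α : ℝ} (hα : 0 < α) (hα1 : α < 1)

/-- |pch (-α) n| ≤ α * (n-1)! for n ≥ 1 -/
lemma abs_pch_le (hα : 0 < α) (hα1 : α < 1) : ∀ n : ℕ, 1 ≤ n →
    |pch (-α) n| ≤ α * (n - 1).factorial := by
  intro n hn
  induction n with
  | zero => omega
  | succ n ih =>
    rcases Nat.eq_zero_or_pos n with h0 | h0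
    · subst h0; simp [pch_succ, pch_zero, abs_of_pos hα]
    · have h1 : (1:ℝ) ≤ n := by exact_mod_cast h0
      rw [pch_succ, abs_mul]
      have hnn : |(-α + (n:ℝ))| = (n:ℝ) - α := by
        rw [abs_of_nonneg (by linarith)]; ring
      rw [hnn]
      have : (n + 1 - 1).factorial = n.factorial := by simp
      rw [this]
      calc |pch (-α) n| * ((n:ℝ) - α) ≤ (α * (n-1).factorial) * n := by
            apply mul_le_mul (ih h0) (by linarith) (by linarith) (by positivity)
      _ = α * ((n - 1).factorial * n) := by ring
      _ = α * n.factorial := by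
            congr 1
            have := Nat.succ_pred_eq_of_pos h0
            calc ((n-1).factorial : ℝ) * n = (((n-1).factorial * n : ℕ) : ℝ) := by push_cast; ring
            _ = (n.factorial : ℝ) := by
                congr 1
                rw [← Nat.succ_pred_eq_of_pos h0, Nat.factorial_succ]
                simp [Nat.succ_pred_eq_of_pos h0]
                ring

/-- the square-coefficient sequence -/
noncomputable def b (α : ℝ) (n : ℕ) : ℝ := (pch (-α) n / n.factorial) ^ 2

lemma b_nonneg (α : ℝ) (n : ℕ) : 0 ≤ b α n := sq_nonneg _

lemma b_zero (α : ℝ) : b α 0 = 1 := by simp [b, pch_zero]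

lemma b_le (hα : 0 < α) (hα1 : α < 1) {n : ℕ} (hn : 1 ≤ n) : b α n ≤ α ^ 2 / n ^ 2 := by
  have h1 : |pch (-α) n| ≤ α * (n - 1).factorial := abs_pch_le hα hα1 n hn
  have h2 : ((n-1).factorial : ℝ) * n = n.factorial := by
    calc ((n-1).factorial : ℝ) * n = (((n-1).factorial * n : ℕ) : ℝ) := by push_cast; ring
    _ = _ := by
      congr 1
      rw [← Nat.succ_pred_eq_of_pos hn, Nat.factorial_succ]
      simp [Nat.succ_pred_eq_of_pos hn]; ring
  have hnf : (0:ℝ) < n.factorial := by exact_mod_cast n.factorial_pos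
  have hn0 : (0:ℝ) < n := by exact_mod_cast hn
  rw [b, div_pow, div_le_div_iff₀ (by positivity) (by positivity)]
  have : pch (-α) n ^ 2 ≤ (α * (n-1).factorial)^2 := by
    rw [← sq_abs]; exact pow_le_pow_left₀ (abs_nonneg _) h1 2
  calc pch (-α) n ^ 2 * n ^ 2 ≤ (α * (n-1).factorial)^2 * n^2 := by
        apply mul_le_mul_of_nonneg_right this (by positivity)
  _ = α^2 * (((n-1).factorial : ℝ) * n)^2 := by ring
  _ = α^2 * (n.factorial : ℝ)^2 := by rw [h2]
  _ = α^2 * n.factorial ^ 2 := by norm_num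

lemma summable_b (hα : 0 < α) (hα1 : α < 1) : Summable (b α) := by
  rw [← summable_nat_add_iff 1]
  apply Summable.of_nonneg_of_le (fun n => b_nonneg α (n+1))
    (fun n => b_le hα hα1 (Nat.le_add_left 1 n))
  apply Summable.mul_left
  have : Summable (fun n : ℕ => 1 / (n:ℝ)^2) := by
    simpa using Real.summable_one_div_nat_pow.mpr (by norm_num : 1 < 2)
  rw [← summable_nat_add_iff 1] at this
  simpa [div_eq_mul_inv] using this

end Alpha

end Gauss17

namespace Gauss17

section U

variable {α : ℝ}

/-- the term of ₂F₁(-α,-α;c;1) -/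
noncomputable def u (α c : ℝ) (n : ℕ) : ℝ := pch (-α) n ^ 2 / (pch c n * n.factorial)

lemma u_nonneg {c : ℝ} (hc : 0 < c) (n : ℕ) : 0 ≤ u α c n := by
  have h1 := pch_pos hc n
  have h2 : (0:ℝ) < n.factorial := by exact_mod_cast n.factorial_pos
  exact div_nonneg (sq_nonneg _) (by positivity)

lemma u_zero (c : ℝ) : u α c 0 = 1 := by simp [u, pch_zero]

lemma u_one_eq_b : u α 1 n = b α n := by
  rw [u, b, pch_one, div_pow]
  ring

lemma u_le_b {c : ℝ} (hc : 1 ≤ c) (n : ℕ) : u α c n ≤ b α n := by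
  rw [u, b, div_pow]
  have hf : (0:ℝ) < n.factorial := by exact_mod_cast n.factorial_pos
  have hp := pch_pos (by linarith : (0:ℝ) < c) n
  apply div_le_div_of_nonneg_left (sq_nonneg _) (by positivity)
  calc (n.factorial:ℝ)^2 = n.factorial * n.factorial := sq (n.factorial : ℝ) ▸ by ring
  _ ≤ pch c n * n.factorial := by
      apply mul_le_mul_of_nonneg_right (factorial_le_pch hc n) (le_of_lt hf)

lemma u_le_b_div_c {c : ℝ} (hc : 1 ≤ c) {n : ℕ} (hn : 1 ≤ n) : u α c n ≤ b α n / c := by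
  rw [u, b, div_pow, div_div]
  have hf : (0:ℝ) < n.factorial := by exact_mod_cast n.factorial_pos
  apply div_le_div_of_nonneg_left (sq_nonneg _) (by positivity)
  calc (n.factorial:ℝ)^2 * c = (c * n.factorial) * n.factorial := by ring
  _ ≤ pch c n * n.factorial := by
      apply mul_le_mul_of_nonneg_right (c_mul_factorial_le_pch hc hn) (le_of_lt hf)

lemma summable_u (hα : 0 < α) (hα1 : α < 1) {c : ℝ} (hc : 1 ≤ c) : Summable (u α c) :=
  Summable.of_nonneg_of_le (u_nonneg (by linarith)) (u_le_b hc) (summable_b hα hα1)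

end U

end Gauss17

namespace Gauss17

noncomputable def F (α c : ℝ) : ℝ := ∑' n, u α c n

section Rel

variable {α : ℝ}

lemma pch_shift {c : ℝ} (hc : 0 < c) (n : ℕ) : pch (c+1) n = pch c n * (c + n) / c := by
  have h := pch_succ_left c n
  rw [pch_succ] at h
  field_simp
  linarith [h]

lemma per_term (hα : 0 < α) {c : ℝ} (hc : 0 < c) (n : ℕ) :
    (c + 2*α) * u α c n - ((c+α)^2/c) * u α (c+1) n
      = (n : ℝ) * u α c n - ((n:ℝ)+1) * u α c (n+1) := by
  have hp := pch_pos hc n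
  have hcn : (0:ℝ) < c + n := by positivity
  have hf : (0:ℝ) < n.factorial := by exact_mod_cast n.factorial_pos
  simp only [u]
  rw [pch_shift hc, pch_succ, pch_succ, Nat.factorial_succ]
  push_cast
  field_simp
  ring

lemma w_tendsto_zero (hα : 0 < α) (hα1 : α < 1) {c : ℝ} (hc : 1 ≤ c) :
    Filter.Tendsto (fun N : ℕ => (N:ℝ) * u α c N) Filter.atTop (nhds 0) := by
  have hb : ∀ N : ℕ, (N:ℝ) * u α c N ≤ α^2 / N := by
    intro N
    rcases Nat.eq_zero_or_pos N with h0 | h0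
    · subst h0; simp
    · have h1 : u α c N ≤ α^2 / N^2 := le_trans (u_le_b hc N) (b_le hα hα1 h0)
      have hN : (0:ℝ) < N := by exact_mod_cast h0
      calc (N:ℝ) * u α c N ≤ (N:ℝ) * (α^2 / N^2) := by
            apply mul_le_mul_of_nonneg_left h1 (le_of_lt hN)
      _ = α^2 / N := by field_simp
  have h0 : ∀ N : ℕ, 0 ≤ (N:ℝ) * u α c N := fun N =>
    mul_nonneg (Nat.cast_nonneg N) (u_nonneg (by linarith) N)
  apply squeeze_zero h0 hb
  simpa using tendsto_const_div_atTop_nhds_zero_nat (α^2)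

lemma F_rel (hα : 0 < α) (hα1 : α < 1) {c : ℝ} (hc : 1 ≤ c) :
    (c + 2*α) * F α c = ((c+α)^2/c) * F α (c+1) := by
  have hc0 : (0:ℝ) < c := by linarith
  have hs1 : Summable (u α c) := summable_u hα hα1 hc
  have hs2 : Summable (u α (c+1)) := summable_u hα hα1 (by linarith)
  set g : ℕ → ℝ := fun n => (c + 2*α) * u α c n - ((c+α)^2/c) * u α (c+1) n with hg_def
  have hg : Summable g := ((hs1.mul_left _).sub (hs2.mul_left _))
  have htsum : ∑' n, g n = (c + 2*α) * F α c - ((c+α)^2/c) * F α (c+1) := by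
    rw [hg_def, Summable.tsum_sub (hs1.mul_left _) (hs2.mul_left _), tsum_mul_left, tsum_mul_left, F, F]
  have htel : ∀ N : ℕ, ∑ i ∈ Finset.range N, g i = - ((N:ℝ) * u α c N) := by
    intro N
    have : ∀ i, g i = (fun n : ℕ => (n:ℝ) * u α c n) i
        - (fun n : ℕ => (n:ℝ) * u α c n) (i+1) := by
      intro i
      simp only [hg_def]
      rw [per_term hα hc0 i]
      push_cast; ring_nf
    rw [Finset.sum_congr rfl (fun i _ => this i), Finset.sum_range_sub']
    simp
  have hzero : ∑' n, g n = 0 := by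
    have h1 := hg.hasSum.tendsto_sum_nat
    have h2 : Filter.Tendsto (fun N : ℕ => ∑ i ∈ Finset.range N, g i)
        Filter.atTop (nhds 0) := by
      simp only [htel]
      simpa using (w_tendsto_zero hα hα1 hc).neg
    exact tendsto_nhds_unique h1 h2
  rw [hzero] at htsum
  linarith

end Rel

end Gauss17

namespace Gauss17

section Limit

variable {α : ℝ}

noncomputable def P (α : ℝ) (m : ℕ) : ℝ :=
  ∏ j ∈ Finset.range m, (((j:ℝ)+1+α)^2 / ((((j:ℝ)+1)) * ((j:ℝ)+1+2*α)))

lemma F_one_eq (hα : 0 < α) (hα1 : α < 1) (m : ℕ) :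
    F α 1 = P α m * F α ((m:ℝ)+1) := by
  induction m with
  | zero => simp [P]
  | succ m ih =>
    have hm0 : (0:ℝ) ≤ m := Nat.cast_nonneg m
    have hc : (1:ℝ) ≤ (m:ℝ)+1 := by linarith
    have hrel := F_rel hα hα1 hc
    have hc2α : (0:ℝ) < (m:ℝ)+1 + 2*α := by linarith
    have hc0 : (0:ℝ) < (m:ℝ)+1 := by linarith
    have hFc : F α ((m:ℝ)+1)
        = (((m:ℝ)+1+α)^2/((((m:ℝ)+1))*(((m:ℝ)+1)+2*α))) * F α (((m:ℝ)+1)+1) := by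
      field_simp
      field_simp at hrel
      linarith
    have hPsucc : P α (m+1) = P α m * (((m:ℝ)+1+α)^2 / ((((m:ℝ)+1)) * ((m:ℝ)+1+2*α))) := by
      simp only [P]
      rw [Finset.prod_range_succ]
    rw [hPsucc]
    push_cast
    rw [ih, hFc]
    ring

lemma tendsto_F_one : ∀ (hα : 0 < α) (hα1 : α < 1),
    Filter.Tendsto (fun m : ℕ => F α ((m:ℝ)+1)) Filter.atTop (nhds 1) := by
  intro hα hα1
  have hSb : Summable (fun n => b α (n+1)) := (summable_b hα hα1).comp_injective (add_left_injective 1)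
  set Sb : ℝ := ∑' n, b α (n+1) with hSb_def
  have key : ∀ m : ℕ, 0 ≤ F α ((m:ℝ)+1) - 1 ∧ F α ((m:ℝ)+1) - 1 ≤ Sb / ((m:ℝ)+1) := by
    intro m
    have hm0 : (0:ℝ) ≤ m := Nat.cast_nonneg m
    have hc : (1:ℝ) ≤ (m:ℝ)+1 := by linarith
    have hc0 : (0:ℝ) < (m:ℝ)+1 := by linarith
    have hsu : Summable (u α ((m:ℝ)+1)) := summable_u hα hα1 hc
    have hsplit : F α ((m:ℝ)+1) = 1 + ∑' n, u α ((m:ℝ)+1) (n+1) := by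
      rw [F, Summable.tsum_eq_zero_add hsu, u_zero]
    have hsu' : Summable (fun n => u α ((m:ℝ)+1) (n+1)) :=
      hsu.comp_injective (add_left_injective 1)
    constructor
    · rw [hsplit]
      have : 0 ≤ ∑' n, u α ((m:ℝ)+1) (n+1) :=
        tsum_nonneg (fun n => u_nonneg (by linarith) _)
      linarith
    · rw [hsplit]
      have hle : ∑' n, u α ((m:ℝ)+1) (n+1) ≤ ∑' n, b α (n+1) / ((m:ℝ)+1) := by
        apply Summable.tsum_le_tsum _ hsu' (hSb.div_const _)
        intro n
        exact u_le_b_div_c hc (Nat.le_add_left 1 n)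
      rw [tsum_div_const] at hle
      linarith
  have h1 : Filter.Tendsto (fun m : ℕ => F α ((m:ℝ)+1) - 1) Filter.atTop (nhds 0) := by
    apply squeeze_zero (fun m => (key m).1) (fun m => (key m).2)
    apply Filter.Tendsto.div_atTop (tendsto_const_nhds)
    exact Filter.tendsto_atTop_add_const_right _ 1 tendsto_natCast_atTop_atTop
  have := h1.add_const 1
  simpa using this

lemma P_eq (hα : 0 < α) {m : ℕ} (hm : 1 ≤ m) :
    P α m = (2*α/α^2) * (Real.GammaSeq (2*α) m / (Real.GammaSeq α m)^2) := by
  have hm0 : (0:ℝ) < m := by exact_mod_cast hm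
  have hA : ∏ j ∈ Finset.range (m+1), (α + (j:ℝ)) = α * ∏ j ∈ Finset.range m, ((j:ℝ)+1+α) := by
    rw [Finset.prod_range_succ']
    simp only [Nat.cast_add, Nat.cast_one, Nat.cast_zero, add_zero]
    rw [mul_comm]
    congr 1
    apply Finset.prod_congr rfl
    intro j _; ring
  have hC : ∏ j ∈ Finset.range (m+1), (2*α + (j:ℝ)) = (2*α) * ∏ j ∈ Finset.range m, ((j:ℝ)+1+2*α) := by
    rw [Finset.prod_range_succ']
    simp only [Nat.cast_add, Nat.cast_one, Nat.cast_zero, add_zero]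
    rw [mul_comm]
    congr 1
    apply Finset.prod_congr rfl
    intro j _; ring
  have hB : ∏ j ∈ Finset.range m, ((j:ℝ)+1) = (m.factorial : ℝ) := by
    rw [← Finset.prod_range_add_one_eq_factorial m]
    push_cast
    rfl
  have hApos : (0:ℝ) < ∏ j ∈ Finset.range m, ((j:ℝ)+1+α) :=
    Finset.prod_pos (fun j _ => by positivity)
  have hCpos : (0:ℝ) < ∏ j ∈ Finset.range m, ((j:ℝ)+1+2*α) :=
    Finset.prod_pos (fun j _ => by positivity)
  have hfpos : (0:ℝ) < (m.factorial : ℝ) := by exact_mod_cast m.factorial_pos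
  have hrpow : ((m:ℝ) ^ α) ^ 2 = (m:ℝ) ^ (2*α) := by
    rw [← Real.rpow_natCast ((m:ℝ)^α) 2, ← Real.rpow_mul (le_of_lt hm0)]
    norm_num
    ring_nf
  have hrpos : (0:ℝ) < (m:ℝ) ^ α := Real.rpow_pos_of_pos hm0 α
  have hr2pos : (0:ℝ) < (m:ℝ) ^ (2*α) := Real.rpow_pos_of_pos hm0 _
  have hP : P α m = (∏ j ∈ Finset.range m, ((j:ℝ)+1+α))^2 /
      ((m.factorial : ℝ) * ∏ j ∈ Finset.range m, ((j:ℝ)+1+2*α)) := by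
    rw [P, ← hB]
    rw [← Finset.prod_pow, ← Finset.prod_mul_distrib, ← Finset.prod_div_distrib]
  rw [hP, Real.GammaSeq, Real.GammaSeq, hA, hC, ← hrpow]
  field_simp
end Limit

end Gauss17

namespace Gauss17

theorem gauss_sum {α : ℝ} (hα : 0 < α) (hα1 : α < 1) :
    ∑' n : ℕ, ((ascPochhammer ℝ n).eval (-α) / (n.factorial : ℝ)) ^ 2
      = Real.Gamma (2*α + 1) / Real.Gamma (α + 1) ^ 2 := by
  have hΓα : (0:ℝ) < Real.Gamma α := Real.Gamma_pos_of_pos hα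
  have hΓ2α : (0:ℝ) < Real.Gamma (2*α) := Real.Gamma_pos_of_pos (by linarith)
  have hL : Real.Gamma (2*α+1) / Real.Gamma (α+1)^2
      = (2*α/α^2) * (Real.Gamma (2*α) / Real.Gamma α ^ 2) := by
    rw [Real.Gamma_add_one (by linarith : 2*α ≠ 0), Real.Gamma_add_one (ne_of_gt hα)]
    field_simp
  -- limit of P
  have hPlim : Filter.Tendsto (P α) Filter.atTop
      (nhds ((2*α/α^2) * (Real.Gamma (2*α) / Real.Gamma α ^ 2))) := by
    have h1 : Filter.Tendsto
        (fun m : ℕ => (2*α/α^2) * (Real.GammaSeq (2*α) m / (Real.GammaSeq α m)^2))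
        Filter.atTop (nhds ((2*α/α^2) * (Real.Gamma (2*α) / Real.Gamma α ^ 2))) := by
      apply Filter.Tendsto.const_mul
      exact ((Real.GammaSeq_tendsto_Gamma (2*α)).div
        ((Real.GammaSeq_tendsto_Gamma α).pow 2) (by positivity))
    apply h1.congr'
    filter_upwards [Filter.eventually_ge_atTop 1] with m hm
    exact (P_eq hα hm).symm
  have hFlim := tendsto_F_one hα hα1
  have hprod : Filter.Tendsto (fun m : ℕ => P α m * F α ((m:ℝ)+1)) Filter.atTop
      (nhds ((2*α/α^2) * (Real.Gamma (2*α) / Real.Gamma α ^ 2) * 1)) := hPlim.mul hFlim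
  have hconst : Filter.Tendsto (fun _ : ℕ => F α 1) Filter.atTop (nhds (F α 1)) :=
    tendsto_const_nhds
  have hEq : F α 1 = (2*α/α^2) * (Real.Gamma (2*α) / Real.Gamma α ^ 2) * 1 := by
    apply tendsto_nhds_unique hconst
    apply hprod.congr
    intro m
    exact (F_one_eq hα hα1 m).symm
  have hF1 : F α 1 = ∑' n : ℕ, ((ascPochhammer ℝ n).eval (-α) / (n.factorial : ℝ)) ^ 2 := by
    rw [F]
    apply tsum_congr
    intro n
    rw [u_one_eq_b]
    rfl
  rw [← hF1, hEq, hL, mul_one]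

end Gauss17

namespace Gauss17

lemma integrable_mul_of_L2 {Ω : Type*} [MeasurableSpace Ω] {μ : MeasureTheory.Measure Ω}
    {f g : Ω → ℝ} (hf : MeasureTheory.MemLp f 2 μ) (hg : MeasureTheory.MemLp g 2 μ) :
    MeasureTheory.Integrable (fun ω => f ω * g ω) μ := by
  have h1 := (hf.add hg).integrable_sq
  have h2 := hf.integrable_sq
  have h3 := hg.integrable_sq
  have heq : (fun ω => f ω * g ω) = fun ω => (((f ω + g ω)^2 - f ω^2) - g ω^2)/2 := by
    funext ω; ring
  rw [heq]
  exact ((h1.sub h2).sub h3).div_const 2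

end Gauss17


/-- For (possibly correlated) jointly circular Gaussian `Ȳ_ℓ` with
variances `λ_ℓ ≤ M`, `α ∈ (0,1)`, `Φ̂_ℓ = |Ȳ_ℓ|²`, assuming the moment formulas
`E[Φ̂_ℓ^α] = λ_ℓ^α Γ(α+1)` and
`E[Φ̂_{ℓ₁}^α Φ̂_{ℓ₂}^α] = λ_{ℓ₁}^α λ_{ℓ₂}^α Γ(α+1)² ₂F₁(−α,−α;1;ρ²_{ℓ₁ℓ₂})`,
the variance of `m̂_k = (1/(αN)) Σ_ℓ e^{2πikℓ/N} Φ̂_ℓ^α` is bounded by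
`(Γ(2α+1) − Γ(α+1)²) M^{2α}/α²`, independently of `N`. -/
theorem variance_bound_correlated_spectral_components {Ω : Type*} [MeasurableSpace Ω]
    (μ : Measure Ω) [IsProbabilityMeasure μ] (N : ℕ) (hN : 0 < N)
    (Ybar : Fin N → Ω → ℂ) (hmeas : ∀ ℓ, Measurable (Ybar ℓ))
    (α : ℝ) (hα : 0 < α) (hα1 : α < 1)
    (Φhat : Fin N → Ω → ℝ)
    (hΦhat : ∀ ℓ ω, Φhat ℓ ω = ‖Ybar ℓ ω‖ ^ 2)
    (hL2 : ∀ ℓ, MemLp (fun ω => Φhat ℓ ω ^ α) 2 μ)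
    (lam : Fin N → ℝ) (hlampos : ∀ ℓ, 0 < lam ℓ)
    (M : ℝ) (hlamM : ∀ ℓ, lam ℓ ≤ M)
    (ρsq : Fin N → Fin N → ℝ)
    (hρ0 : ∀ ℓ₁ ℓ₂, 0 ≤ ρsq ℓ₁ ℓ₂) (hρ1 : ∀ ℓ₁ ℓ₂, ρsq ℓ₁ ℓ₂ ≤ 1)
    (hρdiag : ∀ ℓ, ρsq ℓ ℓ = 1)
    (hmean : ∀ ℓ, ∫ ω, Φhat ℓ ω ^ α ∂μ = lam ℓ ^ α * Real.Gamma (α + 1))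
    (hcross : ∀ ℓ₁ ℓ₂, ∫ ω, Φhat ℓ₁ ω ^ α * Φhat ℓ₂ ω ^ α ∂μ
      = lam ℓ₁ ^ α * lam ℓ₂ ^ α * Real.Gamma (α + 1) ^ 2 *
          ∑' n : ℕ, ((ascPochhammer ℝ n).eval (-α) / (n.factorial : ℝ)) ^ 2 *
            ρsq ℓ₁ ℓ₂ ^ n)
    (k : ℤ) (mhat : Ω → ℂ)
    (hmhat : ∀ ω, mhat ω = (α * N : ℂ)⁻¹ * ∑ ℓ : Fin N,
      Complex.exp (2 * Real.pi * Complex.I * k * (ℓ : ℕ) / N) * (Φhat ℓ ω ^ α : ℝ)) :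
    ∫ ω, ‖mhat ω - ∫ ω', mhat ω' ∂μ‖ ^ 2 ∂μ
      ≤ (Real.Gamma (2 * α + 1) - Real.Gamma (α + 1) ^ 2) * M ^ (2 * α) / α ^ 2 := by
  have hN' : (0:ℝ) < N := by exact_mod_cast hN
  have hM0 : 0 < M := lt_of_lt_of_le (hlampos ⟨0, hN⟩) (hlamM ⟨0, hN⟩)
  have hΓ1 : 0 < Real.Gamma (α+1) := Real.Gamma_pos_of_pos (by linarith)
  have hS : ∑' n : ℕ, ((ascPochhammer ℝ n).eval (-α) / (n.factorial : ℝ)) ^ 2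
      = Real.Gamma (2*α+1) / Real.Gamma (α+1)^2 := Gauss17.gauss_sum hα hα1
  have hsumb : Summable (fun n : ℕ => ((ascPochhammer ℝ n).eval (-α) / (n.factorial:ℝ))^2) :=
    Gauss17.summable_b hα hα1
  have hbnn : ∀ n : ℕ, 0 ≤ ((ascPochhammer ℝ n).eval (-α) / (n.factorial:ℝ))^2 :=
    fun n => sq_nonneg _
  -- basic integrability
  have hX1 : ∀ ℓ, Integrable (fun ω => Φhat ℓ ω ^ α) μ :=
    fun ℓ => (hL2 ℓ).integrable one_le_two
  set m : Fin N → ℝ := fun ℓ => ∫ ω, Φhat ℓ ω ^ α ∂μ with hm_def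
  set D : Fin N → Ω → ℝ := fun ℓ ω => Φhat ℓ ω ^ α - m ℓ with hD_def
  have hD2 : ∀ ℓ, MemLp (D ℓ) 2 μ := fun ℓ => (hL2 ℓ).sub (memLp_const _)
  have hDmul : ∀ ℓ₁ ℓ₂, Integrable (fun ω => D ℓ₁ ω * D ℓ₂ ω) μ :=
    fun ℓ₁ ℓ₂ => Gauss17.integrable_mul_of_L2 (hD2 ℓ₁) (hD2 ℓ₂)
  have hXmul : ∀ ℓ₁ ℓ₂, Integrable (fun ω => Φhat ℓ₁ ω ^ α * Φhat ℓ₂ ω ^ α) μ :=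
    fun ℓ₁ ℓ₂ => Gauss17.integrable_mul_of_L2 (hL2 ℓ₁) (hL2 ℓ₂)
  -- covariance identity
  have hcov : ∀ ℓ₁ ℓ₂, ∫ ω, D ℓ₁ ω * D ℓ₂ ω ∂μ
      = (∫ ω, Φhat ℓ₁ ω ^ α * Φhat ℓ₂ ω ^ α ∂μ) - m ℓ₁ * m ℓ₂ := by
    intro ℓ₁ ℓ₂
    have h1 : (fun ω => D ℓ₁ ω * D ℓ₂ ω)
        = fun ω => Φhat ℓ₁ ω ^ α * Φhat ℓ₂ ω ^ α - m ℓ₁ * Φhat ℓ₂ ω ^ α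
            - m ℓ₂ * Φhat ℓ₁ ω ^ α + m ℓ₁ * m ℓ₂ := by
      funext ω; simp only [hD_def]; ring
    have Ia : Integrable (fun ω => m ℓ₁ * Φhat ℓ₂ ω ^ α) μ := (hX1 ℓ₂).const_mul _
    have Ib : Integrable (fun ω => m ℓ₂ * Φhat ℓ₁ ω ^ α) μ := (hX1 ℓ₁).const_mul _
    have I2 : Integrable
        (fun ω => Φhat ℓ₁ ω ^ α * Φhat ℓ₂ ω ^ α - m ℓ₁ * Φhat ℓ₂ ω ^ α) μ :=
      (hXmul ℓ₁ ℓ₂).sub Ia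
    have I3 : Integrable
        (fun ω => Φhat ℓ₁ ω ^ α * Φhat ℓ₂ ω ^ α - m ℓ₁ * Φhat ℓ₂ ω ^ α
          - m ℓ₂ * Φhat ℓ₁ ω ^ α) μ := I2.sub Ib
    rw [h1, integral_add I3 (integrable_const _), integral_sub I2 Ib,
      integral_sub (hXmul ℓ₁ ℓ₂) Ia, integral_const_mul, integral_const_mul, integral_const]
    simp only [measure_univ, probReal_univ, ENNReal.toReal_one, smul_eq_mul, one_mul]
    have e1 : ∫ ω, Φhat ℓ₁ ω ^ α ∂μ = m ℓ₁ := rfl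
    have e2 : ∫ ω, Φhat ℓ₂ ω ^ α ∂μ = m ℓ₂ := rfl
    rw [e1, e2]
    ring
  -- covariance bound
  have hcovb : ∀ ℓ₁ ℓ₂, 0 ≤ ∫ ω, D ℓ₁ ω * D ℓ₂ ω ∂μ ∧
      ∫ ω, D ℓ₁ ω * D ℓ₂ ω ∂μ
        ≤ M ^ (2*α) * (Real.Gamma (2*α+1) - Real.Gamma (α+1)^2) := by
    intro ℓ₁ ℓ₂
    have hρnn := hρ0 ℓ₁ ℓ₂
    have hρle := hρ1 ℓ₁ ℓ₂
    have hsumT : Summable (fun n : ℕ =>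
        ((ascPochhammer ℝ n).eval (-α) / (n.factorial:ℝ))^2 * ρsq ℓ₁ ℓ₂ ^ n) := by
      apply Summable.of_nonneg_of_le
        (fun n => mul_nonneg (hbnn n) (pow_nonneg hρnn n)) _ hsumb
      intro n
      calc ((ascPochhammer ℝ n).eval (-α) / (n.factorial:ℝ))^2 * ρsq ℓ₁ ℓ₂ ^ n
          ≤ ((ascPochhammer ℝ n).eval (-α) / (n.factorial:ℝ))^2 * 1 := by
            apply mul_le_mul_of_nonneg_left (pow_le_one₀ hρnn hρle) (hbnn n)
      _ = _ := mul_one _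
    set T : ℝ := ∑' n : ℕ,
        ((ascPochhammer ℝ n).eval (-α) / (n.factorial:ℝ))^2 * ρsq ℓ₁ ℓ₂ ^ n with hT_def
    have hT1 : 1 ≤ T := by
      have h0 : ((ascPochhammer ℝ 0).eval (-α) / ((0:ℕ).factorial:ℝ))^2 * ρsq ℓ₁ ℓ₂ ^ 0 = 1 := by
        simp
      have := Summable.le_tsum hsumT 0 (fun n _ => mul_nonneg (hbnn n) (pow_nonneg hρnn n))
      rw [h0] at this
      exact this
    have hTS : T ≤ Real.Gamma (2*α+1) / Real.Gamma (α+1)^2 := by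
      rw [← hS]
      apply Summable.tsum_le_tsum _ hsumT hsumb
      intro n
      calc ((ascPochhammer ℝ n).eval (-α) / (n.factorial:ℝ))^2 * ρsq ℓ₁ ℓ₂ ^ n
          ≤ ((ascPochhammer ℝ n).eval (-α) / (n.factorial:ℝ))^2 * 1 := by
            apply mul_le_mul_of_nonneg_left (pow_le_one₀ hρnn hρle) (hbnn n)
      _ = _ := mul_one _
    have hcovval : ∫ ω, D ℓ₁ ω * D ℓ₂ ω ∂μ
        = lam ℓ₁ ^ α * lam ℓ₂ ^ α * Real.Gamma (α+1)^2 * (T - 1) := by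
      rw [hcov ℓ₁ ℓ₂, hcross ℓ₁ ℓ₂, hm_def]
      simp only [hmean]
      rw [← hT_def]
      ring
    have hlam1 : 0 < lam ℓ₁ ^ α := Real.rpow_pos_of_pos (hlampos ℓ₁) α
    have hlam2 : 0 < lam ℓ₂ ^ α := Real.rpow_pos_of_pos (hlampos ℓ₂) α
    constructor
    · rw [hcovval]
      have : 0 ≤ T - 1 := by linarith
      positivity
    · rw [hcovval]
      have hG : Real.Gamma (α+1)^2 * (T-1) ≤ Real.Gamma (2*α+1) - Real.Gamma (α+1)^2 := by
        have h1 : Real.Gamma (α+1)^2 * T ≤ Real.Gamma (2*α+1) := by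
          have := mul_le_mul_of_nonneg_left hTS (le_of_lt (by positivity : (0:ℝ) < Real.Gamma (α+1)^2))
          calc Real.Gamma (α+1)^2 * T ≤ Real.Gamma (α+1)^2 * (Real.Gamma (2*α+1) / Real.Gamma (α+1)^2) := this
          _ = Real.Gamma (2*α+1) := by field_simp
        linarith
      have hlamM2 : lam ℓ₁ ^ α * lam ℓ₂ ^ α ≤ M ^ (2*α) := by
        have h1 : lam ℓ₁ ^ α ≤ M ^ α := Real.rpow_le_rpow (le_of_lt (hlampos ℓ₁)) (hlamM ℓ₁) (le_of_lt hα)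
        have h2 : lam ℓ₂ ^ α ≤ M ^ α := Real.rpow_le_rpow (le_of_lt (hlampos ℓ₂)) (hlamM ℓ₂) (le_of_lt hα)
        have h3 : lam ℓ₁ ^ α * lam ℓ₂ ^ α ≤ M ^ α * M ^ α :=
          mul_le_mul h1 h2 (le_of_lt hlam2) (le_of_lt (Real.rpow_pos_of_pos hM0 α))
        calc lam ℓ₁ ^ α * lam ℓ₂ ^ α ≤ M ^ α * M ^ α := h3
        _ = M ^ (2*α) := by rw [← Real.rpow_add hM0]; ring_nf
      have hT1' : 0 ≤ Real.Gamma (α+1)^2 * (T-1) := by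
        have : 0 ≤ T - 1 := by linarith
        positivity
      calc lam ℓ₁ ^ α * lam ℓ₂ ^ α * Real.Gamma (α+1)^2 * (T - 1)
          = (lam ℓ₁ ^ α * lam ℓ₂ ^ α) * (Real.Gamma (α+1)^2 * (T - 1)) := by ring
      _ ≤ M ^ (2*α) * (Real.Gamma (2*α+1) - Real.Gamma (α+1)^2) := by
          apply mul_le_mul hlamM2 hG hT1' (le_of_lt (Real.rpow_pos_of_pos hM0 _))
  -- complex phases
  set e : Fin N → ℂ := fun ℓ =>
    Complex.exp (2 * Real.pi * Complex.I * k * ((ℓ : ℕ) : ℂ) / N) with he_def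
  have habs_e : ∀ ℓ, ‖e ℓ‖ = 1 := by
    intro ℓ
    simp only [he_def]
    have : (2 * (Real.pi:ℂ) * Complex.I * k * ((ℓ:ℕ):ℂ) / N)
        = ((2 * Real.pi * k * ((ℓ:ℕ):ℝ) / N : ℝ) : ℂ) * Complex.I := by
      push_cast
      ring
    rw [this, Complex.norm_exp_ofReal_mul_I]
  -- integral of mhat
  have hint_e : ∀ ℓ, Integrable (fun ω => e ℓ * ((Φhat ℓ ω ^ α : ℝ) : ℂ)) μ :=
    fun ℓ => ((hX1 ℓ).ofReal).const_mul _
  have hmhat_int : ∫ ω, mhat ω ∂μ = (α * N : ℂ)⁻¹ * ∑ ℓ, e ℓ * ((m ℓ : ℝ) : ℂ) := by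
    have h1 : ∫ ω, mhat ω ∂μ
        = ∫ ω, (α * N : ℂ)⁻¹ * ∑ ℓ, e ℓ * ((Φhat ℓ ω ^ α : ℝ) : ℂ) ∂μ := by
      apply integral_congr_ae
      filter_upwards with ω
      rw [hmhat ω]
    rw [h1, integral_const_mul, integral_finset_sum _ (fun ℓ _ => hint_e ℓ)]
    congr 1
    apply Finset.sum_congr rfl
    intro ℓ _
    rw [integral_const_mul]
    congr 1
    exact integral_ofReal
  -- deviation
  have hdev : ∀ ω, mhat ω - ∫ ω', mhat ω' ∂μ
      = (α * N : ℂ)⁻¹ * ∑ ℓ, e ℓ * ((D ℓ ω : ℝ) : ℂ) := by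
    intro ω
    rw [hmhat ω, hmhat_int, ← mul_sub, ← Finset.sum_sub_distrib]
    congr 1
    apply Finset.sum_congr rfl
    intro ℓ _
    rw [← mul_sub]
    congr 1
    rw [hD_def]
    push_cast
    ring
  -- pointwise expansion of the squared modulus
  have hsq : ∀ ω, ‖mhat ω - ∫ ω', mhat ω' ∂μ‖^2
      = (α^2 * N^2)⁻¹ * ∑ ℓ₁, ∑ ℓ₂,
          (e ℓ₁ * (starRingEnd ℂ) (e ℓ₂)).re * (D ℓ₁ ω * D ℓ₂ ω) := by
    intro ω
    rw [hdev ω, norm_mul, mul_pow]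
    have hc1 : ‖(α * N : ℂ)⁻¹‖^2 = (α^2 * N^2)⁻¹ := by
      rw [norm_inv]
      rw [show ((α : ℂ) * N) = ((α * N : ℝ) : ℂ) by push_cast; ring]
      rw [Complex.norm_real, Real.norm_eq_abs, abs_of_pos (by positivity : (0:ℝ) < α * N)]
      rw [inv_pow]
      congr 1
      ring
    rw [hc1]
    congr 1
    set z : ℂ := ∑ ℓ, e ℓ * ((D ℓ ω : ℝ) : ℂ) with hz_def
    have hzz : z * (starRingEnd ℂ) z
        = ∑ ℓ₁, ∑ ℓ₂, (e ℓ₁ * (starRingEnd ℂ) (e ℓ₂)) * (((D ℓ₁ ω * D ℓ₂ ω : ℝ)) : ℂ) := by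
      rw [hz_def, map_sum, Finset.sum_mul_sum]
      apply Finset.sum_congr rfl
      intro ℓ₁ _
      apply Finset.sum_congr rfl
      intro ℓ₂ _
      rw [map_mul, Complex.conj_ofReal]
      push_cast
      ring
    have h2 : ‖z‖^2 = (z * (starRingEnd ℂ) z).re := by
      rw [Complex.mul_conj, Complex.sq_norm]
      simp
    rw [h2, hzz, Complex.re_sum]
    apply Finset.sum_congr rfl
    intro ℓ₁ _
    rw [Complex.re_sum]
    apply Finset.sum_congr rfl
    intro ℓ₂ _
    simp [Complex.mul_re]
  -- integrate
  have hkey : ∫ ω, ‖mhat ω - ∫ ω', mhat ω' ∂μ‖^2 ∂μ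
      = (α^2 * N^2)⁻¹ * ∑ ℓ₁, ∑ ℓ₂,
          (e ℓ₁ * (starRingEnd ℂ) (e ℓ₂)).re * ∫ ω, D ℓ₁ ω * D ℓ₂ ω ∂μ := by
    have h1 : ∫ ω, ‖mhat ω - ∫ ω', mhat ω' ∂μ‖^2 ∂μ
        = ∫ ω, (α^2 * N^2)⁻¹ * ∑ ℓ₁, ∑ ℓ₂,
            (e ℓ₁ * (starRingEnd ℂ) (e ℓ₂)).re * (D ℓ₁ ω * D ℓ₂ ω) ∂μ := by
      apply integral_congr_ae
      filter_upwards with ω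
      exact hsq ω
    rw [h1, integral_const_mul]
    congr 1
    rw [integral_finset_sum _
      (fun ℓ₁ _ => integrable_finset_sum _ (fun ℓ₂ _ => (hDmul ℓ₁ ℓ₂).const_mul _))]
    apply Finset.sum_congr rfl
    intro ℓ₁ _
    rw [integral_finset_sum _ (fun ℓ₂ _ => (hDmul ℓ₁ ℓ₂).const_mul _)]
    apply Finset.sum_congr rfl
    intro ℓ₂ _
    rw [integral_const_mul]
  -- final bound
  set B : ℝ := M ^ (2*α) * (Real.Gamma (2*α+1) - Real.Gamma (α+1)^2) with hB_def
  have hterm : ∀ ℓ₁ ℓ₂ : Fin N,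
      (e ℓ₁ * (starRingEnd ℂ) (e ℓ₂)).re * ∫ ω, D ℓ₁ ω * D ℓ₂ ω ∂μ ≤ B := by
    intro ℓ₁ ℓ₂
    have hre : (e ℓ₁ * (starRingEnd ℂ) (e ℓ₂)).re ≤ 1 := by
      calc (e ℓ₁ * (starRingEnd ℂ) (e ℓ₂)).re ≤ ‖e ℓ₁ * (starRingEnd ℂ) (e ℓ₂)‖ :=
            Complex.re_le_norm _
      _ = 1 := by rw [norm_mul, Complex.norm_conj, habs_e, habs_e, mul_one]
    have h0 := (hcovb ℓ₁ ℓ₂).1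
    have hle := (hcovb ℓ₁ ℓ₂).2
    calc (e ℓ₁ * (starRingEnd ℂ) (e ℓ₂)).re * ∫ ω, D ℓ₁ ω * D ℓ₂ ω ∂μ
        ≤ 1 * ∫ ω, D ℓ₁ ω * D ℓ₂ ω ∂μ := mul_le_mul_of_nonneg_right hre h0
    _ = ∫ ω, D ℓ₁ ω * D ℓ₂ ω ∂μ := one_mul _
    _ ≤ B := hle
  have hsum : ∑ ℓ₁ : Fin N, ∑ ℓ₂ : Fin N,
      (e ℓ₁ * (starRingEnd ℂ) (e ℓ₂)).re * ∫ ω, D ℓ₁ ω * D ℓ₂ ω ∂μ ≤ (N:ℝ)^2 * B := by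
    calc ∑ ℓ₁ : Fin N, ∑ ℓ₂ : Fin N,
        (e ℓ₁ * (starRingEnd ℂ) (e ℓ₂)).re * ∫ ω, D ℓ₁ ω * D ℓ₂ ω ∂μ
        ≤ ∑ _ℓ₁ : Fin N, ∑ _ℓ₂ : Fin N, B := by
          apply Finset.sum_le_sum
          intro ℓ₁ _
          apply Finset.sum_le_sum
          intro ℓ₂ _
          exact hterm ℓ₁ ℓ₂
    _ = (N:ℝ)^2 * B := by
          simp [Finset.sum_const, Finset.card_univ]
          ring
  rw [hkey]
  have hpos : (0:ℝ) ≤ (α^2 * N^2)⁻¹ := by positivity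
  calc (α^2 * N^2)⁻¹ * ∑ ℓ₁, ∑ ℓ₂,
      (e ℓ₁ * (starRingEnd ℂ) (e ℓ₂)).re * ∫ ω, D ℓ₁ ω * D ℓ₂ ω ∂μ
      ≤ (α^2 * N^2)⁻¹ * ((N:ℝ)^2 * B) := mul_le_mul_of_nonneg_left hsum hpos
  _ = (Real.Gamma (2 * α + 1) - Real.Gamma (α + 1) ^ 2) * M ^ (2 * α) / α ^ 2 := by
      rw [hB_def]
      field_simp
end
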